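/- Let F ∈ M_{2d}(ℝ) be a symplectic matrix (Fᵀ J F = J with J = [[0, Id_d], [−Id_d, 0]]), and define the complex d × d matrix Z = (i Id_d Id_d) Fᵀ (−i Id_d ; Id_d) (row-block times Fᵀ times column-block). Then Z Z* = W + 2 Id_d where W = (i Id_d Id_d)(Fᵀ F)(−i Id_d ; Id_d) is Hermitian positive semidefinite; in particular Z Z* − 2 Id_d is positive semidefinite, Z is invertible, and the operator norm of Z^{−1} is at most 2^{−1/2}. -/

import Mathlib

open Matrix
open scoped ComplexOrder

/-!
Writing `K = (i·1  1)`, one has `Kᴴ K = 1 + i J` and `K J Kᴴ = -2i`, where `J` is the standard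
symplectic form. Hence for real `M, N` with `M J N = J`,
`(K M Kᴴ)(K N Kᴴ) = K (M N) Kᴴ + i K (M J N) Kᴴ = K (M N) Kᴴ + 2`.
Applied to `M = Fᵀ, N = F` and to `M = F, N = Fᵀ` this gives `Z Zᴴ = W + 2` and
`Zᴴ Z = K F Fᵀ Kᴴ + 2`, both compressions `K G Gᵀ Kᴴ = (K G)(K G)ᴴ` being positive semidefinite.
So `‖Z w‖² ≥ 2 ‖w‖²`, which makes `Z` invertible with `‖Z⁻¹‖ ≤ 2^{-1/2}`.
-/

namespace Matrix

theorem map_ofReal_mul {m n o : Type*} [Fintype n] (M : Matrix m n ℝ) (N : Matrix n o ℝ) :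
    (M * N).map Complex.ofReal = M.map Complex.ofReal * N.map Complex.ofReal :=
  Matrix.map_mul (f := Complex.ofRealHom)

theorem conjTranspose_map_ofReal {m n : Type*} (M : Matrix m n ℝ) :
    (M.map Complex.ofReal)ᴴ = Mᵀ.map Complex.ofReal := by
  rw [← conjTranspose_eq_transpose_of_trivial, conjTranspose_map]
  exact fun x ↦ (Complex.conj_ofReal x).symm

theorem fromBlocks_zero_one_neg_one_zero {l R : Type*} [DecidableEq l] [CommRing R] :
    fromBlocks (0 : Matrix l l R) 1 (-1) 0 = -J l R := by
  simp [J, fromBlocks_neg]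

variable {l : Type*} [DecidableEq l]

noncomputable def complexBlockRow (l : Type*) [DecidableEq l] : Matrix l (l ⊕ l) ℂ :=
  fromCols (Complex.I • 1) 1

theorem conjTranspose_complexBlockRow :
    (complexBlockRow l)ᴴ = fromRows ((-Complex.I) • 1) 1 := by
  simp [complexBlockRow, conjTranspose_fromCols_eq_fromRows_conjTranspose]

variable [Fintype l]

theorem conjTranspose_complexBlockRow_mul_self :
    (complexBlockRow l)ᴴ * complexBlockRow l = 1 + Complex.I • J l ℂ := by
  rw [conjTranspose_complexBlockRow, complexBlockRow, fromRows_mul_fromCols, J, ← fromBlocks_one,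
    fromBlocks_smul, fromBlocks_add]
  congr 1 <;> simp [smul_smul]

theorem complexBlockRow_mul_J_mul_conjTranspose :
    complexBlockRow l * J l ℂ * (complexBlockRow l)ᴴ = (-2 * Complex.I) • 1 := by
  rw [conjTranspose_complexBlockRow, complexBlockRow, J, fromCols_mul_fromBlocks,
    fromCols_mul_fromRows]
  simp [two_mul, add_smul]

noncomputable def complexCompression (M : Matrix (l ⊕ l) (l ⊕ l) ℝ) : Matrix l l ℂ :=
  complexBlockRow l * M.map Complex.ofReal * (complexBlockRow l)ᴴ

theorem conjTranspose_complexCompression (M : Matrix (l ⊕ l) (l ⊕ l) ℝ) :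
    (complexCompression M)ᴴ = complexCompression Mᵀ := by
  simp only [complexCompression, conjTranspose_mul, conjTranspose_conjTranspose,
    conjTranspose_map_ofReal, Matrix.mul_assoc]

theorem complexCompression_mul {M N : Matrix (l ⊕ l) (l ⊕ l) ℝ} (h : M * J l ℝ * N = J l ℝ) :
    complexCompression M * complexCompression N = complexCompression (M * N) + (2 : ℂ) • 1 := by
  set K := complexBlockRow l
  have hJ (X : Matrix (l ⊕ l) l ℂ) :
      M.map Complex.ofReal * (J l ℂ * (N.map Complex.ofReal * X)) = J l ℂ * X := by
    have hJℂ : (J l ℝ).map Complex.ofReal = J l ℂ := map_J l Complex.ofRealHom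
    rw [← Matrix.mul_assoc, ← Matrix.mul_assoc, ← hJℂ, ← map_ofReal_mul, ← map_ofReal_mul, h]
  calc complexCompression M * complexCompression N
      = K * M.map Complex.ofReal * (Kᴴ * K) * N.map Complex.ofReal * Kᴴ := by
        simp only [complexCompression, K, Matrix.mul_assoc]
    _ = complexCompression (M * N) + Complex.I • (K * J l ℂ * Kᴴ) := by
        rw [conjTranspose_complexBlockRow_mul_self]
        simp only [hJ, complexCompression, K, map_ofReal_mul, Matrix.mul_add, Matrix.add_mul,
          Matrix.mul_smul, Matrix.smul_mul, Matrix.mul_one, Matrix.mul_assoc]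
    _ = complexCompression (M * N) + (2 : ℂ) • 1 := by
        rw [complexBlockRow_mul_J_mul_conjTranspose, smul_smul]
        congr 2
        rw [mul_left_comm, Complex.I_mul_I]
        norm_num

theorem posSemidef_complexCompression_mul_transpose (M : Matrix (l ⊕ l) (l ⊕ l) ℝ) :
    (complexCompression (M * Mᵀ)).PosSemidef := by
  have hfactor : complexCompression (M * Mᵀ)
      = (complexBlockRow l * M.map Complex.ofReal) * (complexBlockRow l * M.map Complex.ofReal)ᴴ := by
    simp only [complexCompression, map_ofReal_mul, conjTranspose_mul, conjTranspose_map_ofReal,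
      Matrix.mul_assoc]
  rw [hfactor]
  exact posSemidef_self_mul_conjTranspose _

theorem complexCompression_mul_conjTranspose {A : Matrix (l ⊕ l) (l ⊕ l) ℝ}
    (hA : A ∈ symplecticGroup l ℝ) :
    complexCompression A * (complexCompression A)ᴴ = complexCompression (A * Aᵀ) + (2 : ℂ) • 1 := by
  rw [conjTranspose_complexCompression, complexCompression_mul (SymplecticGroup.mem_iff.mp hA)]

section LowerBound

variable {𝕜 n : Type*} [RCLike 𝕜] [Fintype n] [DecidableEq n] {A : Matrix n n 𝕜} {c : ℝ}

theorem mul_sq_norm_le_sq_norm_toEuclideanLin (h : (Aᴴ * A - (c : 𝕜) • 1).PosSemidef)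
    (w : EuclideanSpace 𝕜 n) : c * ‖w‖ ^ 2 ≤ ‖toEuclideanLin A w‖ ^ 2 := by
  have hAw : toEuclideanLin (Aᴴ * A - (c : 𝕜) • 1) w
      = LinearMap.adjoint (toEuclideanLin A) (toEuclideanLin A w) - (c : 𝕜) • w := by
    rw [← toEuclideanLin_conjTranspose_eq_adjoint]
    simp [toLpLin_apply, mulVec_mulVec, smul_mulVec]
  have h₀ := (isPositive_toEuclideanLin_iff.mpr h).re_inner_nonneg_right w
  rw [hAw, inner_sub_right, inner_smul_right, LinearMap.adjoint_inner_right, map_sub,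
    inner_self_eq_norm_sq_to_K, inner_self_eq_norm_sq_to_K] at h₀
  simpa using h₀

theorem isUnit_of_posSemidef_conjTranspose_mul_self_sub (hc : 0 < c)
    (h : (Aᴴ * A - (c : 𝕜) • 1).PosSemidef) : IsUnit A := by
  refine mulVec_injective_iff_isUnit.mp fun x y hxy ↦ ?_
  have hbound := mul_sq_norm_le_sq_norm_toEuclideanLin h (WithLp.toLp 2 (x - y))
  simp only [toLpLin_apply, mulVec_sub, hxy, sub_self, WithLp.toLp_zero, norm_zero,
    ne_eq, OfNat.ofNat_ne_zero, not_false_eq_true, zero_pow] at hbound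
  have hnorm : ‖WithLp.toLp 2 (x - y)‖ ^ 2 ≤ 0 := nonpos_of_mul_nonpos_right hbound hc
  rwa [sq_nonpos_iff, norm_eq_zero, WithLp.toLp_eq_zero, sub_eq_zero] at hnorm

theorem norm_toEuclideanLin_inv_le (hc : 0 < c) (h : (Aᴴ * A - (c : 𝕜) • 1).PosSemidef)
    (v : EuclideanSpace 𝕜 n) : ‖toEuclideanLin A⁻¹ v‖ ≤ (√c)⁻¹ * ‖v‖ := by
  have hA : A * A⁻¹ = 1 := mul_nonsing_inv A <| (isUnit_iff_isUnit_det A).mp <|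
    isUnit_of_posSemidef_conjTranspose_mul_self_sub hc h
  have hv : toEuclideanLin A (toEuclideanLin A⁻¹ v) = v := by
    simp [toLpLin_apply, mulVec_mulVec, hA]
  have hbound := mul_sq_norm_le_sq_norm_toEuclideanLin h (toEuclideanLin A⁻¹ v)
  rw [hv] at hbound
  rwa [le_inv_mul_iff₀ (by positivity), ← pow_le_pow_iff_left₀ (by positivity) (by positivity)
    two_ne_zero, mul_pow, Real.sq_sqrt hc.le]

end LowerBound

end Matrix

theorem symplectic_Z_invertible (d : ℕ)
    (F : Matrix (Fin d ⊕ Fin d) (Fin d ⊕ Fin d) ℝ)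
    (J : Matrix (Fin d ⊕ Fin d) (Fin d ⊕ Fin d) ℝ)
    (hJ : J = Matrix.fromBlocks (0 : Matrix (Fin d) (Fin d) ℝ) 1 (-1) 0)
    (hF : Fᵀ * J * F = J)
    (Z W : Matrix (Fin d) (Fin d) ℂ)
    (hZ : Z = Matrix.fromCols (Complex.I • (1 : Matrix (Fin d) (Fin d) ℂ)) (1 : Matrix (Fin d) (Fin d) ℂ) *
      (Fᵀ.map (Complex.ofReal)) *
      Matrix.fromRows ((-Complex.I) • (1 : Matrix (Fin d) (Fin d) ℂ)) (1 : Matrix (Fin d) (Fin d) ℂ))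
    (hW : W = Matrix.fromCols (Complex.I • (1 : Matrix (Fin d) (Fin d) ℂ)) (1 : Matrix (Fin d) (Fin d) ℂ) *
      ((Fᵀ * F).map (Complex.ofReal)) *
      Matrix.fromRows ((-Complex.I) • (1 : Matrix (Fin d) (Fin d) ℂ)) (1 : Matrix (Fin d) (Fin d) ℂ)) :
    Z * Zᴴ = W + (2:ℂ) • (1 : Matrix (Fin d) (Fin d) ℂ) ∧
    W.IsHermitian ∧ W.PosSemidef ∧
    (Z * Zᴴ - (2:ℂ) • (1 : Matrix (Fin d) (Fin d) ℂ)).PosSemidef ∧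
    IsUnit Z ∧
    ∀ v : EuclideanSpace ℂ (Fin d),
      ‖Matrix.toEuclideanLin (Z⁻¹) v‖ ≤ (2:ℝ) ^ (-(1:ℝ)/2) * ‖v‖ := by
  -- Mathlib's `J` is the negative of the paper's, which does not change the symplectic group.
  have hFsymp : F ∈ symplecticGroup (Fin d) ℝ := by
    rw [SymplecticGroup.mem_iff', ← neg_inj, ← Matrix.neg_mul, ← Matrix.mul_neg,
      ← fromBlocks_zero_one_neg_one_zero, ← hJ, hF]
  have hZ' : Z = complexCompression Fᵀ := by
    rw [hZ, complexCompression, conjTranspose_complexBlockRow]; rfl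
  have hZH : Zᴴ = complexCompression F := by
    rw [hZ', conjTranspose_complexCompression, transpose_transpose]
  have hW' : W = complexCompression (Fᵀ * Fᵀᵀ) := by
    rw [hW, transpose_transpose, complexCompression, conjTranspose_complexBlockRow]; rfl
  have hZZH : Z * Zᴴ = W + (2 : ℂ) • 1 := by
    rw [hW', hZ', complexCompression_mul_conjTranspose (SymplecticGroup.transpose_mem hFsymp)]
  have hW_psd : W.PosSemidef := hW' ▸ posSemidef_complexCompression_mul_transpose Fᵀ
  have hZHZ : (Zᴴ * Z - ((2 : ℝ) : ℂ) • 1).PosSemidef := by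
    have hZ'' : Z = (complexCompression F)ᴴ := by rw [← hZH, conjTranspose_conjTranspose]
    rw [hZH, hZ'', complexCompression_mul_conjTranspose hFsymp, Complex.ofReal_ofNat,
      add_sub_cancel_right]
    exact posSemidef_complexCompression_mul_transpose F
  have hrpow : (2 : ℝ) ^ (-(1 : ℝ) / 2) = (√2)⁻¹ := by
    rw [neg_div, Real.rpow_neg zero_le_two, ← Real.sqrt_eq_rpow]
  refine ⟨hZZH, hW_psd.isHermitian, hW_psd, by rwa [hZZH, add_sub_cancel_right],
    isUnit_of_posSemidef_conjTranspose_mul_self_sub two_pos hZHZ, fun v ↦ ?_⟩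
  rw [hrpow]
  exact norm_toEuclideanLin_inv_le two_pos hZHZ v
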